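/- Let S be a nonempty set, f : S → ℕ ∪ {∞}, and suppose each d_p (p ∈ S) satisfies (d3). Then S̃^f satisfies (d3): for every short exact sequence 0 → K → L → N → 0, if S̃^f(L) < S̃^f(N) then S̃^f(K) ≤ S̃^f(L). -/

import Mathlib

universe u v

/-- A `d`-function: assigns to every `Λ`-module a value in `ℕ ∪ {∞}`. -/
abbrev DFun (Λ : Type u) [Ring Λ] :=
  (N : Type u) → [AddCommGroup N] → [Module Λ N] → ℕ∞

/-- Condition (d3): if `d L < d N` then `d K ≤ d L`. -/
def CondD3 (Λ : Type u) [Ring Λ] (d : DFun Λ) : Prop :=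
  ∀ (K L N : Type u) [AddCommGroup K] [Module Λ K] [AddCommGroup L] [Module Λ L]
    [AddCommGroup N] [Module Λ N] (f : K →ₗ[Λ] L) (g : L →ₗ[Λ] N),
    Function.Injective f → Function.Surjective g →
    LinearMap.range f = LinearMap.ker g →
    d L < d N → d K ≤ d L

/-- `S̃^f(N) = sup { i | d_p(N) ≥ min(i, f(p)) for all p ∈ S }`. -/
noncomputable def StildeF (Λ : Type u) [Ring Λ] {S : Type v} (d : S → DFun Λ)
    (f : S → ℕ∞) (N : Type u) [AddCommGroup N] [Module Λ N] : ℕ∞ :=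
  sSup {x : ℕ∞ | ∃ i : ℕ, x = (i : ℕ∞) ∧ ∀ p : S, min (i : ℕ∞) (f p) ≤ d p N}

/-! `S̃^f(N)` only depends on the values `p ↦ d_p(N)`, and the set under its supremum is a down-set
of `ℕ`, so `k ≤ S̃^f(N)` exactly when `min(k, f p) ≤ d_p(N)` for all `p`. If `S̃^f(L) = n < S̃^f(N)`,
then `n + 1` passes this test for `N` but fails it for `L` at some `p`; there `d_p(L) < d_p(N)`,
so (d3) for `d_p` gives `d_p(K) ≤ d_p(L)`, and `n + 1` fails the test for `K` at the same `p`. -/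

namespace StildeF

variable {S : Type v} (f : S → ℕ∞)

noncomputable def truncSup (x : S → ℕ∞) : ℕ∞ :=
  sSup {y : ℕ∞ | ∃ i : ℕ, y = (i : ℕ∞) ∧ ∀ p : S, min (i : ℕ∞) (f p) ≤ x p}

variable {f}

theorem natCast_le_truncSup_iff {x : S → ℕ∞} {k : ℕ} :
    (k : ℕ∞) ≤ truncSup f x ↔ ∀ p, min (k : ℕ∞) (f p) ≤ x p := by
  refine ⟨fun hk p => ?_, fun hk => le_sSup ⟨k, rfl, hk⟩⟩
  cases k with
  | zero => simp
  | succ j =>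
    have hj : (j : ℕ∞) < truncSup f x := lt_of_lt_of_le (by norm_cast; omega) hk
    obtain ⟨_, ⟨i, rfl, hi⟩, hji⟩ := lt_sSup_iff.mp hj
    have hle : ((j + 1 : ℕ) : ℕ∞) ≤ i := by norm_cast at hji ⊢
    exact (min_le_min_right _ hle).trans (hi p)

theorem truncSup_le_of_lt {a b c : S → ℕ∞} (habc : ∀ p, b p < c p → a p ≤ b p)
    (hbc : truncSup f b < truncSup f c) : truncSup f a ≤ truncSup f b := by
  obtain ⟨n, hn⟩ := ENat.ne_top_iff_exists.mp hbc.ne_top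
  have hc : ((n + 1 : ℕ) : ℕ∞) ≤ truncSup f c := by
    rw [← hn] at hbc
    exact_mod_cast Order.add_one_le_of_lt hbc
  have hb : ¬ ((n + 1 : ℕ) : ℕ∞) ≤ truncSup f b := by
    rw [← hn]
    norm_cast
    omega
  rw [natCast_le_truncSup_iff] at hc hb
  push Not at hb
  obtain ⟨p, hp⟩ := hb
  have hap : a p < min ((n + 1 : ℕ) : ℕ∞) (f p) :=
    (habc p (hp.trans_le (hc p))).trans_lt hp
  have ha : ¬ ((n + 1 : ℕ) : ℕ∞) ≤ truncSup f a := by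
    rw [natCast_le_truncSup_iff]
    exact fun h => (h p).not_gt hap
  rw [← hn, ← ENat.lt_add_one_iff (ENat.natCast_ne_top n)]
  exact_mod_cast not_le.mp ha

end StildeF

theorem stmt11_general (Λ : Type u) [Ring Λ] (S : Type v)
    (d : S → DFun Λ) (f : S → ℕ∞) (hd : ∀ p : S, CondD3 Λ (d p)) :
    CondD3 Λ (fun N _ _ => StildeF Λ d f N) := by
  intro K L N _ _ _ _ _ _ φ ψ hφ hψ hexact hLN
  exact StildeF.truncSup_le_of_lt (fun p => hd p K L N φ ψ hφ hψ hexact) hLN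

/-- If each `d_p` satisfies (d3), then `S̃^f` satisfies (d3). -/
theorem stmt11 (Λ : Type u) [Ring Λ] (S : Type v) [Nonempty S]
    (d : S → DFun Λ) (f : S → ℕ∞) (hd : ∀ p : S, CondD3 Λ (d p)) :
    CondD3 Λ (fun N _ _ => StildeF Λ d f N) :=
  stmt11_general Λ S d f hd
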